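/- arXiv:2603.14708 — 6 statements merged into one kernel-verified Lean document; each statement's English description precedes it below -/
import Mathlib

section
/- Let z ∈ ℂ with z ≠ 0. Then there exist N₀ ∈ ℕ and C > 0 such that for all integers n ≥ N₀ one has |(i·z^{n+1}/(2n−1)!!)·h_n^{(1)}(z) − 1| ≤ C/n; that is, h_n^{(1)}(z) = ((2n−1)!!/(i·z^{n+1}))·(1 + O(1/n)) as n → ∞. -/
open Complex

/-- Spherical Hankel function of the first kind (Rayleigh closed form). -/
noncomputable def sphHankel (n : ℕ) (z : ℂ) : ℂ :=
  (-Complex.I) ^ (n + 1) * (Complex.exp (Complex.I * z) / z) *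
    ∑ k ∈ Finset.range (n + 1),
      (Complex.I ^ k / ((Nat.factorial k : ℂ) * (2 * z) ^ k)) *
        ((Nat.factorial (n + k) : ℂ) / (Nat.factorial (n - k) : ℂ))

/-- Double factorial `(2n-1)!! = (2n)!/(2^n n!)`, as a complex number. -/
noncomputable def doubleFac (n : ℕ) : ℂ :=
  (Nat.factorial (2 * n) : ℂ) / ((2 : ℂ) ^ n * (Nat.factorial n : ℂ))

/-!
Reversing the Rayleigh sum (`k = n - j`) gives
`i z^(n+1) / (2n-1)!! · h_n(z) = e^(iz) ∑_{j ≤ n} (-iz)^j / j! · a(n,j)` with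
`a(n,j) = 2^j n!(2n-j)! / ((n-j)!(2n)!) = ∏_{i<j} 2(n-i)/(2n-i)`.
So up to the factor `e^(iz)` this is the exponential series of `e^(-iz)` with weights `a(n,j)`.
Each factor `2(n-i)/(2n-i)` lies in `[0,1]` and within `i/n` of `1`, hence `|a(n,j) - 1| ≤ j²/n`.
Comparing termwise with `e^(iz) e^(-iz) = 1` and using `j² ≤ 4^j` gives the error
`e^|z| e^(4|z|) / n`.
-/

open Finset Nat

theorem Finset.one_sub_prod_le_sum_one_sub {ι R : Type*} [CommRing R] [PartialOrder R]
    [IsOrderedRing R] (s : Finset ι) {f : ι → R} (h0 : ∀ i ∈ s, 0 ≤ f i) (h1 : ∀ i ∈ s, f i ≤ 1) :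
    1 - ∏ i ∈ s, f i ≤ ∑ i ∈ s, (1 - f i) := by
  classical
  induction s using Finset.induction_on with
  | empty => simp
  | insert a s ha ih =>
    rw [prod_insert ha, sum_insert ha]
    have h0s : ∀ i ∈ s, 0 ≤ f i := fun i hi => h0 i (mem_insert_of_mem hi)
    have h1s : ∀ i ∈ s, f i ≤ 1 := fun i hi => h1 i (mem_insert_of_mem hi)
    calc 1 - f a * ∏ i ∈ s, f i = (1 - f a) * ∏ i ∈ s, f i + (1 - ∏ i ∈ s, f i) := by ring
      _ ≤ (1 - f a) + ∑ i ∈ s, (1 - f i) :=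
        add_le_add (mul_le_of_le_one_right (sub_nonneg.2 (h1 a (mem_insert_self a s)))
          (prod_le_one h0s h1s)) (ih h0s h1s)

theorem Nat.cast_descFactorial_eq_div {K : Type*} [Field K] [CharZero K] {n k : ℕ} (h : k ≤ n) :
    (n.descFactorial k : K) = n ! / (n - k)! := by
  rw [eq_div_iff (Nat.cast_ne_zero.2 (factorial_ne_zero _)), mul_comm]
  exact_mod_cast factorial_mul_descFactorial h

theorem sq_le_four_pow (j : ℕ) : (j : ℝ) ^ 2 ≤ 4 ^ j := by
  have h : (j : ℝ) ≤ 2 ^ j := by exact_mod_cast Nat.lt_two_pow_self.le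
  calc (j : ℝ) ^ 2 ≤ (2 ^ j) ^ 2 := by gcongr
    _ = 4 ^ j := by rw [← pow_mul, mul_comm, pow_mul]; norm_num

theorem norm_sub_exp_le_of_hasSum {w S : ℂ} {c : ℕ → ℂ} {ε : ℝ}
    (hS : HasSum (fun j => w ^ j / j ! * c j) S) (hc : ∀ j, ‖c j - 1‖ ≤ ε * j ^ 2) :
    ‖S - exp w‖ ≤ ε * Real.exp (4 * ‖w‖) := by
  have hε : 0 ≤ ε := by simpa using (norm_nonneg _).trans (hc 1)
  have hexp : HasSum (fun j => w ^ j / j !) (exp w) := by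
    rw [exp_eq_exp_ℂ]; exact NormedSpace.expSeries_div_hasSum_exp w
  have hmajor : HasSum (fun j => ε * ((4 * ‖w‖) ^ j / j !)) (ε * Real.exp (4 * ‖w‖)) := by
    rw [Real.exp_eq_exp_ℝ]; exact (NormedSpace.expSeries_div_hasSum_exp _).mul_left ε
  refine (hS.sub hexp).norm_le_of_bounded hmajor fun j => ?_
  calc ‖w ^ j / (j ! : ℂ) * c j - w ^ j / (j ! : ℂ)‖ = ‖w‖ ^ j / j ! * ‖c j - 1‖ := by
        rw [← mul_sub_one (w ^ j / (j ! : ℂ)), norm_mul, norm_div, norm_pow, norm_natCast]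
    _ ≤ ‖w‖ ^ j / j ! * (ε * 4 ^ j) := by
        gcongr
        exact (hc j).trans (mul_le_mul_of_nonneg_left (sq_le_four_pow j) hε)
    _ = ε * ((4 * ‖w‖) ^ j / j !) := by ring

noncomputable def hankelWeight (n j : ℕ) : ℝ :=
  2 ^ j * n.descFactorial j / (2 * n).descFactorial j

noncomputable def hankelFactor (n i : ℕ) : ℝ := (2 * (n - i : ℕ) : ℝ) / (2 * n - i : ℕ)

theorem hankelWeight_eq_prod (n j : ℕ) : hankelWeight n j = ∏ i ∈ range j, hankelFactor n i := by
  simp only [hankelWeight, hankelFactor, descFactorial_eq_prod_range, Nat.cast_prod]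
  rw [prod_div_distrib, prod_mul_distrib, prod_const, card_range]

theorem hankelWeight_eq_zero {n j : ℕ} (h : n < j) : hankelWeight n j = 0 := by
  simp [hankelWeight, descFactorial_eq_zero_iff_lt.2 h]

theorem hankelFactor_nonneg (n i : ℕ) : 0 ≤ hankelFactor n i := by
  unfold hankelFactor; positivity

theorem hankelFactor_le_one (n i : ℕ) : hankelFactor n i ≤ 1 :=
  div_le_one_of_le₀ (by exact_mod_cast (by omega : 2 * (n - i) ≤ 2 * n - i)) (Nat.cast_nonneg _)

theorem one_sub_hankelFactor_le {n : ℕ} (hn : 0 < n) (i : ℕ) : 1 - hankelFactor n i ≤ i / n := by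
  have hnR : (0 : ℝ) < n := by exact_mod_cast hn
  rcases lt_or_ge i n with hi | hi
  · have hi' : (i : ℝ) < n := by exact_mod_cast hi
    have hden : ((2 * n - i : ℕ) : ℝ) = 2 * n - i := by
      push_cast [show i ≤ 2 * n by omega]; ring
    rw [hankelFactor, hden, Nat.cast_sub hi.le, one_sub_div (by linarith),
      show (2 * n - i - 2 * (n - i) : ℝ) = i by ring]
    exact div_le_div_of_nonneg_left (by positivity) hnR (by linarith)
  · rw [hankelFactor, Nat.sub_eq_zero_of_le hi, le_div_iff₀ hnR]
    simpa using hi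

theorem abs_hankelWeight_sub_one_le {n : ℕ} (hn : 0 < n) (j : ℕ) :
    |hankelWeight n j - 1| ≤ j ^ 2 / n := by
  have h0 : ∀ i ∈ range j, 0 ≤ hankelFactor n i := fun i _ => hankelFactor_nonneg n i
  have h1 : ∀ i ∈ range j, hankelFactor n i ≤ 1 := fun i _ => hankelFactor_le_one n i
  rw [hankelWeight_eq_prod, abs_sub_comm, abs_of_nonneg (sub_nonneg.2 (prod_le_one h0 h1))]
  calc 1 - ∏ i ∈ range j, hankelFactor n i ≤ ∑ i ∈ range j, (1 - hankelFactor n i) :=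
        one_sub_prod_le_sum_one_sub _ h0 h1
    _ ≤ ∑ _i ∈ range j, (j / n : ℝ) := by
        gcongr with i hi
        refine (one_sub_hankelFactor_le hn i).trans ?_
        gcongr
        exact_mod_cast (mem_range.1 hi).le
    _ = j ^ 2 / n := by rw [sum_const, card_range, nsmul_eq_mul]; ring

theorem sphHankel_term_eq {z : ℂ} (hz : z ≠ 0) (j k : ℕ) :
    I * z ^ (j + k + 1) / doubleFac (j + k) * ((-I) ^ (j + k + 1) * (exp (I * z) / z) *
      (I ^ k / (k ! * (2 * z) ^ k) * ((j + k + k)! / (j + k - k)!)))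
      = exp (I * z) * ((-I * z) ^ j / j ! * hankelWeight (j + k) j) := by
  have hI : I * (-I) ^ (j + k + 1) * I ^ k = (-I) ^ j := by
    calc _ = (-I) ^ j * (I * -I) ^ (k + 1) := by ring
      _ = _ := by simp
  have hweight : (hankelWeight (j + k) j : ℂ)
      = 2 ^ j * ((j + k)! / k !) / ((2 * (j + k))! / (j + k + k)!) := by
    rw [hankelWeight]
    push_cast
    rw [cast_descFactorial_eq_div (by omega), cast_descFactorial_eq_div (by omega),
      show j + k - j = k by omega, show 2 * (j + k) - j = j + k + k by omega]
  rw [hweight, doubleFac, Nat.add_sub_cancel, mul_pow (-I) z j, ← hI]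
  field_simp
  ring

theorem sphHankel_normalized_eq {z : ℂ} (hz : z ≠ 0) (n : ℕ) :
    I * z ^ (n + 1) / doubleFac n * sphHankel n z
      = exp (I * z) * ∑ j ∈ range (n + 1), (-I * z) ^ j / j ! * hankelWeight n j := by
  rw [mul_sum, ← sum_range_reflect, sphHankel, mul_sum, mul_sum]
  refine sum_congr rfl fun k hk => ?_
  obtain ⟨j, rfl⟩ : ∃ j, n = j + k := ⟨n - k, by have := mem_range.1 hk; omega⟩
  rw [show j + k + 1 - 1 - k = j by omega]
  exact sphHankel_term_eq hz j k

theorem sphHankel_asymptotic (z : ℂ) (hz : z ≠ 0) :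
    ∃ (N₀ : ℕ) (C : ℝ), 0 < C ∧ ∀ n : ℕ, N₀ ≤ n →
      ‖Complex.I * z ^ (n + 1) / doubleFac n * sphHankel n z - 1‖ ≤ C / n := by
  refine ⟨1, Real.exp ‖z‖ * Real.exp (4 * ‖z‖), by positivity, fun n hn => ?_⟩
  have hS : HasSum (fun j => (-I * z) ^ j / j ! * hankelWeight n j)
      (∑ j ∈ range (n + 1), (-I * z) ^ j / j ! * hankelWeight n j) :=
    hasSum_sum_of_ne_finset_zero fun j hj => by
      rw [hankelWeight_eq_zero (by simpa using hj), ofReal_zero, mul_zero]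
  have hc (j : ℕ) : ‖(hankelWeight n j : ℂ) - 1‖ ≤ (n : ℝ)⁻¹ * j ^ 2 := by
    rw [← ofReal_one, ← ofReal_sub, norm_real, Real.norm_eq_abs, inv_mul_eq_div]
    exact abs_hankelWeight_sub_one_le hn j
  have hexp : exp (I * z) * exp (-I * z) = 1 := by rw [← exp_add]; simp
  rw [sphHankel_normalized_eq hz, ← hexp, ← mul_sub, norm_mul]
  calc ‖exp (I * z)‖ * ‖_ - exp (-I * z)‖
      ≤ Real.exp ‖z‖ * ((n : ℝ)⁻¹ * Real.exp (4 * ‖z‖)) := by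
        gcongr
        · exact (norm_exp_le_exp_norm _).trans (by simp)
        · simpa using norm_sub_exp_le_of_hasSum hS hc
    _ = Real.exp ‖z‖ * Real.exp (4 * ‖z‖) / n := by ring
end

section
/- For every integer n ≥ 2 and every z ∈ ℂ with z ≠ 0, the complex derivative of z_n^{(1)} satisfies z_n^{(1)′}(z) = (n(n+1)/z)·h_n^{(1)}(z) − (2n−1)·h_{n−1}^{(1)}(z) + z·h_{n−2}^{(1)}(z). -/
open Complex

/-- `z_n^{(1)}(z) = h_n^{(1)}(z) + z * h_n^{(1)'}(z)`. -/
noncomputable def zfun (n : ℕ) (z : ℂ) : ℂ :=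
  sphHankel n z + z * deriv (sphHankel n) z

/-!
The Rayleigh sum is a Bessel polynomial: `h_n(z) = (-i)^(n+1) e^(iz) z⁻¹ y_n(i/z)` with
`y_n(x) = ∑ₖ (n+k)! / (k! (n-k)!) (x/2)^k`. A Pascal-type recurrence for the coefficients of `y_n`
is the polynomial identity `x² y_{n+1}' + y_{n+1} = y_n + (n+1) x y_{n+1}`, which at `x = i/z`
becomes the lowering relation `h_{n+1}' = h_n - (n+2)/z h_{n+1}`. It gives
`z_{n+1} = z h_n - (n+1) h_{n+1}`, and differentiating this with the lowering relation once more
yields the recurrence for `z_n'`.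
-/

open Finset Polynomial Nat

/-- `(n + k)! / (k! (n - k)! 2^k)`, written as `C(n + k, 2k) (2k - 1)!!` so that it is a natural
number and vanishes for `k > n`. -/
def besselCoeff (n k : ℕ) : ℕ := (n + k).choose (2 * k) * ∏ i ∈ range k, (2 * i + 1)

lemma besselCoeff_eq_zero_of_lt {n k : ℕ} (h : n < k) : besselCoeff n k = 0 := by
  rw [besselCoeff, choose_eq_zero_of_lt (by omega), zero_mul]

lemma besselCoeff_zero_right (n : ℕ) : besselCoeff n 0 = 1 := by
  simp [besselCoeff]

lemma besselCoeff_succ_succ (n k : ℕ) :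
    besselCoeff (n + 1) (k + 1) + k * besselCoeff (n + 1) k
      = besselCoeff n (k + 1) + (n + 1) * besselCoeff (n + 1) k := by
  have pascal : (n + 1 + (k + 1)).choose (2 * (k + 1))
      = (n + k + 1).choose (2 * k + 1) + (n + k + 1).choose (2 * (k + 1)) := by
    rw [show n + 1 + (k + 1) = n + k + 1 + 1 by ring, show 2 * (k + 1) = 2 * k + 1 + 1 by ring,
      choose_succ_succ]
  have absorb : (n + k + 1).choose (2 * k + 1) * (2 * k + 1) + k * (n + 1 + k).choose (2 * k)
      = (n + 1) * (n + 1 + k).choose (2 * k) := by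
    rw [choose_succ_right_eq, show n + 1 + k = n + k + 1 by ring]
    rcases le_or_gt (2 * k) (n + k + 1) with h | h
    · rw [mul_comm, ← add_mul]
      congr 1
      omega
    · simp [choose_eq_zero_of_lt h]
  simp only [besselCoeff, prod_range_succ, pascal]
  rw [show n + (k + 1) = n + k + 1 by ring]
  linear_combination (∏ i ∈ range k, (2 * i + 1)) * absorb

lemma two_pow_mul_factorial_mul_prod_odd (k : ℕ) :
    2 ^ k * k ! * ∏ i ∈ range k, (2 * i + 1) = (2 * k)! := by
  induction k with
  | zero => simp
  | succ k ih =>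
    rw [prod_range_succ, show 2 * (k + 1) = 2 * k + 1 + 1 by ring, factorial_succ, factorial_succ,
      factorial_succ, ← ih]
    ring

lemma besselCoeff_mul_factorial {n k : ℕ} (h : k ≤ n) :
    besselCoeff n k * 2 ^ k * k ! * (n - k)! = (n + k)! := by
  rw [← choose_mul_factorial_mul_factorial (show 2 * k ≤ n + k by omega),
    ← two_pow_mul_factorial_mul_prod_odd, besselCoeff, show n + k - 2 * k = n - k by omega]
  ring

section BesselPoly

variable (R : Type*) [CommSemiring R]

noncomputable def besselPoly (n : ℕ) : R[X] :=
  ∑ k ∈ range (n + 1), monomial k (besselCoeff n k : R)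

variable {R}

@[simp]
lemma coeff_besselPoly (n k : ℕ) : (besselPoly R n).coeff k = besselCoeff n k := by
  rw [besselPoly, finsetSum_coeff, sum_eq_single k]
  · simp
  · intro j _ hj
    simp [coeff_monomial, hj]
  · intro hk
    rw [besselCoeff_eq_zero_of_lt (by simpa using hk), cast_zero, coeff_monomial, if_pos rfl]

lemma besselPoly_succ_ode (n : ℕ) :
    X ^ 2 * derivative (besselPoly R (n + 1)) + besselPoly R (n + 1)
      = besselPoly R n + ((n + 1 : ℕ) : R[X]) * (X * besselPoly R (n + 1)) := by
  ext k
  rcases k with _ | _ | k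
  · simp [besselCoeff_zero_right]
  · have key := congrArg (Nat.cast : ℕ → R) (besselCoeff_succ_succ n 0)
    rw [coeff_add, coeff_X_pow_mul', coeff_add, coeff_natCast_mul, coeff_X_mul]
    simp only [coeff_besselPoly, besselCoeff_zero_right] at key ⊢
    push_cast at key ⊢
    simpa [add_comm] using key
  · have key := congrArg (Nat.cast : ℕ → R) (besselCoeff_succ_succ n (k + 1))
    rw [coeff_add, coeff_X_pow_mul, coeff_derivative, coeff_add, coeff_natCast_mul, coeff_X_mul]
    simp only [coeff_besselPoly]
    push_cast at key ⊢
    convert key using 1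
    ring

end BesselPoly

lemma sphHankel_eq_besselPoly (n : ℕ) (z : ℂ) :
    sphHankel n z = (-I) ^ (n + 1) * (exp (I * z) / z) * (besselPoly ℂ n).eval (I / z) := by
  rw [sphHankel, besselPoly, eval_finsetSum]
  congr 1
  refine sum_congr rfl fun k hk => ?_
  have hfac := congrArg (Nat.cast : ℕ → ℂ) (besselCoeff_mul_factorial (mem_range_succ_iff.mp hk))
  push_cast at hfac
  rw [eval_monomial, ← hfac, mul_pow, div_pow]
  field_simp
  rw [mul_div_mul_right _ _ (mod_cast (n - k).factorial_ne_zero),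
    mul_div_mul_left _ _ (mod_cast k.factorial_ne_zero)]

lemma hasDerivAt_sphHankel_succ (n : ℕ) {z : ℂ} (hz : z ≠ 0) :
    HasDerivAt (sphHankel (n + 1)) (sphHankel n z - (n + 2) / z * sphHankel (n + 1) z) z := by
  set y := besselPoly ℂ (n + 1)
  have hexp : HasDerivAt (fun w => exp (I * w)) (exp (I * z) * I) z := by
    simpa using ((hasDerivAt_id z).const_mul I).cexp
  have hx : HasDerivAt (fun w : ℂ => I / w) (-(I / z ^ 2)) z := by
    simpa [div_eq_mul_inv] using (hasDerivAt_inv hz).const_mul I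
  have hf := ((hexp.fun_div (hasDerivAt_id z) hz).const_mul ((-I) ^ (n + 2))).fun_mul
    ((y.hasDerivAt (I / z)).comp z hx)
  rw [sphHankel_eq_besselPoly n z, sphHankel_eq_besselPoly (n + 1) z,
    show sphHankel (n + 1) = _ from funext (sphHankel_eq_besselPoly (n + 1))]
  refine hf.congr_deriv ?_
  have hode := congrArg (eval (I / z)) (besselPoly_succ_ode (R := ℂ) n)
  simp only [eval_add, eval_mul, eval_pow, eval_X, eval_natCast] at hode
  push_cast at hode
  simp only [id, Function.comp_apply]
  -- besides the ODE at `x = I / z`, only `I ^ 2 = -1` and `z * z⁻¹ = 1` are needed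
  linear_combination ((-I) ^ (n + 1) * exp (I * z) / z) * hode
    - ((-I) ^ (n + 1) * exp (I * z) / z * y.eval (I / z)) * I_sq
    - (I ^ 2 * (-I) ^ (n + 1) * exp (I * z) / z * y.eval (I / z)) * mul_inv_cancel₀ hz

lemma zfun_succ (n : ℕ) {z : ℂ} (hz : z ≠ 0) :
    zfun (n + 1) z = z * sphHankel n z - (n + 1) * sphHankel (n + 1) z := by
  rw [zfun, (hasDerivAt_sphHankel_succ n hz).deriv]
  field_simp
  ring

open Filter Topology in
theorem zfun_deriv_recurrence (n : ℕ) (hn : 2 ≤ n) (z : ℂ) (hz : z ≠ 0) :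
    deriv (zfun n) z =
      (n : ℂ) * ((n : ℂ) + 1) / z * sphHankel n z
        - (2 * (n : ℂ) - 1) * sphHankel (n - 1) z + z * sphHankel (n - 2) z := by
  obtain ⟨m, rfl⟩ : ∃ m, n = m + 2 := ⟨n - 2, by omega⟩
  have hzfun : zfun (m + 2) =ᶠ[𝓝 z]
      fun w => w * sphHankel (m + 1) w - ((m + 1 : ℕ) + 1) * sphHankel (m + 2) w :=
    eventually_ne_nhds hz |>.mono fun w hw => zfun_succ (m + 1) hw
  have hderiv := ((hasDerivAt_id' z).fun_mul (hasDerivAt_sphHankel_succ m hz)).fun_sub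
    ((hasDerivAt_sphHankel_succ (m + 1) hz).const_mul ((m + 1 : ℕ) + 1 : ℂ))
  rw [hzfun.deriv_eq, show m + 2 - 1 = m + 1 by omega, show m + 2 - 2 = m by omega]
  refine hderiv.deriv.trans ?_
  push_cast
  field_simp
  ring
end

section
/- Let z ∈ ℂ with z ≠ 0. Then there exist N₀ ∈ ℕ and C > 0 such that for all integers n ≥ N₀ one has h_n^{(1)}(z) ≠ 0 and |z·z_n^{(1)′}(z)/h_n^{(1)}(z) − n(n+1) + z²| ≤ C/n; that is, z·z_n^{(1)′}(z)/h_n^{(1)}(z) = n(n+1) − z² + O(1/n) as n → ∞. -/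
open Complex

/-!
The Riccati–Hankel function `ξ_n(z) = z h_n(z) = ∑ₖ aₖ e^{iz} z^{-k}` solves
`z² ξ'' + (z² - n(n+1)) ξ = 0`: on `e^{iz} z^{-k}` this operator gives
`-2ik e^{iz} z^{1-k} + (k(k+1) - n(n+1)) e^{iz} z^{-k}`, and the sum over `k` telescopes to zero
because the Rayleigh coefficients satisfy `-2i(k+1) a_{k+1} = (n-k)(n+k+1) aₖ`. Since `z_n = ξ_n'`,
this gives the exact identity `z z_n'(z) = (n(n+1) - z²) h_n(z)`, so the error term vanishes and
only `h_n(z) ≠ 0` for large `n` remains. Reversing the Rayleigh sum and dividing by its top-degree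
term leaves `∑ⱼ (-2iz)^j/j! · n.descFactorial j / (2n).descFactorial j`, which tends to `e^{-iz}`
by Tannery's theorem.
-/

open Filter Finset Topology

noncomputable def expZpow (m : ℤ) (z : ℂ) : ℂ := exp (I * z) * z ^ m

noncomputable def expZpowDeriv (m : ℤ) (z : ℂ) : ℂ := I * expZpow m z + m * expZpow (m - 1) z

section expZpow

variable {z : ℂ}

lemma expZpow_add_one (m : ℤ) (hz : z ≠ 0) : expZpow (m + 1) z = z * expZpow m z := by
  rw [expZpow, expZpow, zpow_add_one₀ hz]; ring

lemma hasDerivAt_expZpow (m : ℤ) (hz : z ≠ 0) : HasDerivAt (expZpow m) (expZpowDeriv m z) z := by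
  have hexp : HasDerivAt (fun w => exp (I * w)) (exp (I * z) * I) z := by
    simpa using ((hasDerivAt_id z).const_mul I).cexp
  refine (hexp.fun_mul (hasDerivAt_zpow m z (Or.inl hz))).congr_deriv ?_
  simp only [expZpowDeriv, expZpow]; ring

lemma hasDerivAt_expZpowDeriv (m : ℤ) (hz : z ≠ 0) :
    HasDerivAt (expZpowDeriv m) (I * expZpowDeriv m z + m * expZpowDeriv (m - 1) z) z :=
  ((hasDerivAt_expZpow m hz).const_mul I).add ((hasDerivAt_expZpow (m - 1) hz).const_mul _)

lemma expZpow_ode (m : ℤ) (M : ℂ) (hz : z ≠ 0) :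
    z ^ 2 * (I * expZpowDeriv m z + m * expZpowDeriv (m - 1) z) + (z ^ 2 - M) * expZpow m z =
      2 * I * m * expZpow (m + 1) z + (m * (m - 1) - M) * expZpow m z := by
  have h1 : expZpow m z = z * expZpow (m - 1) z := by
    rw [← expZpow_add_one _ hz, sub_add_cancel]
  have h2 : expZpow (m - 1) z = z * expZpow (m - 1 - 1) z := by
    rw [← expZpow_add_one _ hz, sub_add_cancel]
  simp only [expZpowDeriv, expZpow_add_one m hz, Int.cast_sub, Int.cast_one]
  rw [h1, h2]
  linear_combination z ^ 4 * expZpow (m - 1 - 1) z * I_sq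

end expZpow

noncomputable def expLaurent (a : ℕ → ℂ) (n : ℕ) (z : ℂ) : ℂ :=
  ∑ k ∈ range (n + 1), a k * expZpow (-k) z

noncomputable def expLaurentDeriv (a : ℕ → ℂ) (n : ℕ) (z : ℂ) : ℂ :=
  ∑ k ∈ range (n + 1), a k * expZpowDeriv (-k) z

noncomputable def expLaurentDeriv2 (a : ℕ → ℂ) (n : ℕ) (z : ℂ) : ℂ :=
  ∑ k ∈ range (n + 1), a k * (I * expZpowDeriv (-k) z + (-k : ℤ) * expZpowDeriv (-k - 1) z)

section expLaurent

variable (a : ℕ → ℂ) (n : ℕ) {z : ℂ}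

lemma hasDerivAt_expLaurent (hz : z ≠ 0) :
    HasDerivAt (expLaurent a n) (expLaurentDeriv a n z) z :=
  HasDerivAt.fun_sum fun k _ => (hasDerivAt_expZpow _ hz).const_mul (a k)

lemma hasDerivAt_expLaurentDeriv (hz : z ≠ 0) :
    HasDerivAt (expLaurentDeriv a n) (expLaurentDeriv2 a n z) z :=
  HasDerivAt.fun_sum fun k _ => (hasDerivAt_expZpowDeriv _ hz).const_mul (a k)

lemma expLaurent_ode (hz : z ≠ 0)
    (hrec : ∀ k < n, -2 * I * (k + 1) * a (k + 1) = (n - k) * (n + k + 1) * a k) :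
    z ^ 2 * expLaurentDeriv2 a n z = (n * (n + 1) - z ^ 2) * expLaurent a n z := by
  set M : ℂ := n * (n + 1)
  have hterm : ∀ k : ℕ, z ^ 2 * (a k * (I * expZpowDeriv (-k) z + (-k : ℤ) *
      expZpowDeriv (-k - 1) z)) + (z ^ 2 - M) * (a k * expZpow (-k) z) =
      -2 * I * k * a k * expZpow (-k + 1) z + (k * (k + 1) - M) * a k * expZpow (-k) z := by
    intro k
    have h := expZpow_ode (-k) M hz
    push_cast at h ⊢
    linear_combination a k * h
  suffices h : z ^ 2 * expLaurentDeriv2 a n z + (z ^ 2 - M) * expLaurent a n z = 0 by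
    linear_combination h
  simp only [expLaurentDeriv2, expLaurent, mul_sum, ← sum_add_distrib, hterm]
  rw [sum_add_distrib, sum_range_succ', sum_range_succ]
  simp only [Nat.cast_add, Nat.cast_one, neg_add, neg_add_cancel_right,
    CharP.cast_eq_zero, mul_zero, zero_mul, add_zero, M, sub_self]
  rw [← sum_add_distrib]
  refine sum_eq_zero fun k hk => ?_
  linear_combination expZpow (-k) z * hrec k (mem_range.1 hk)

end expLaurent

noncomputable def sphHankelCoeff (n k : ℕ) : ℂ :=
  (-I) ^ (n + 1) * I ^ k * (n + k).factorial / (k.factorial * 2 ^ k * (n - k).factorial)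

lemma sphHankelCoeff_succ {n k : ℕ} (hk : k < n) :
    -2 * I * (k + 1) * sphHankelCoeff n (k + 1) = (n - k) * (n + k + 1) * sphHankelCoeff n k := by
  obtain ⟨d, rfl⟩ := Nat.exists_eq_add_of_lt hk
  simp only [sphHankelCoeff, show k + d + 1 - (k + 1) = d by omega,
    show k + d + 1 - k = d + 1 by omega, Nat.factorial_succ,
    show k + d + 1 + (k + 1) = (k + d + 1 + k) + 1 by omega, pow_succ]
  push_cast
  field_simp
  ring_nf
  simp only [I_sq]
  ring

lemma mul_sphHankel {z : ℂ} (n : ℕ) (hz : z ≠ 0) :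
    z * sphHankel n z = expLaurent (sphHankelCoeff n) n z := by
  simp only [sphHankel, expLaurent, expZpow, sphHankelCoeff, mul_sum, zpow_neg, zpow_natCast]
  refine sum_congr rfl fun k _ => ?_
  field_simp
  ring

section zfun

variable {z : ℂ} (n : ℕ)

lemma differentiableAt_sphHankel (hz : z ≠ 0) : DifferentiableAt ℂ (sphHankel n) z := by
  unfold sphHankel
  fun_prop (disch := simp [hz, Nat.factorial_ne_zero])

lemma zfun_eventuallyEq (hz : z ≠ 0) :
    zfun n =ᶠ[𝓝 z] expLaurentDeriv (sphHankelCoeff n) n := by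
  filter_upwards [isOpen_ne.mem_nhds hz] with w hw
  have hmul : (fun v => v * sphHankel n v) =ᶠ[𝓝 w] expLaurent (sphHankelCoeff n) n := by
    filter_upwards [isOpen_ne.mem_nhds hw] with v hv using mul_sphHankel n hv
  have hderiv := (hasDerivAt_id' w).fun_mul (differentiableAt_sphHankel n hw).hasDerivAt
  rw [← (hasDerivAt_expLaurent _ n hw).deriv, ← hmul.deriv_eq, hderiv.deriv, zfun, one_mul]

lemma mul_deriv_zfun (hz : z ≠ 0) :
    z * deriv (zfun n) z = (n * (n + 1) - z ^ 2) * sphHankel n z := by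
  rw [(zfun_eventuallyEq n hz).deriv_eq, (hasDerivAt_expLaurentDeriv _ n hz).deriv]
  have h := expLaurent_ode (sphHankelCoeff n) n hz fun k hk => sphHankelCoeff_succ hk
  rw [← mul_sphHankel n hz] at h
  apply mul_left_cancel₀ hz
  linear_combination h

end zfun

lemma Nat.two_pow_mul_descFactorial_le (n j : ℕ) :
    2 ^ j * n.descFactorial j ≤ (2 * n).descFactorial j := by
  induction j with
  | zero => simp
  | succ j ih =>
    rw [Nat.descFactorial_succ, Nat.descFactorial_succ, pow_succ]
    calc 2 ^ j * 2 * ((n - j) * n.descFactorial j)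
        = 2 * (n - j) * (2 ^ j * n.descFactorial j) := by ring
      _ ≤ (2 * n - j) * (2 * n).descFactorial j := by gcongr; omega

lemma tendsto_descFactorial_div_descFactorial_two_mul (j : ℕ) :
    Tendsto (fun n : ℕ => (n.descFactorial j : ℝ) / (2 * n).descFactorial j) atTop
      (𝓝 ((2 : ℝ)⁻¹ ^ j)) := by
  have htwo : Tendsto (fun n : ℕ => 2 * n) atTop atTop :=
    tendsto_id.const_mul_atTop' two_pos
  have hequiv := (isEquivalent_descFactorial j).div
    ((isEquivalent_descFactorial j).comp_tendsto htwo)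
  refine hequiv.symm.tendsto_nhds (tendsto_const_nhds.congr' ?_)
  filter_upwards [eventually_ne_atTop 0] with n hn
  have hn' : (n : ℝ) ≠ 0 := Nat.cast_ne_zero.2 hn
  simp only [Pi.div_apply, Function.comp_apply, Nat.cast_mul, Nat.cast_ofNat, mul_pow, inv_pow]
  field_simp

lemma descFactorial_div_descFactorial_two_mul_le (n j : ℕ) :
    (n.descFactorial j : ℝ) / (2 * n).descFactorial j ≤ 2⁻¹ ^ j := by
  refine div_le_of_le_mul₀ (by positivity) (by positivity) ?_
  rw [inv_pow, inv_mul_eq_div, le_div_iff₀ (by positivity), mul_comm]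
  exact_mod_cast Nat.two_pow_mul_descFactorial_le n j

noncomputable def sphHankelTail (z : ℂ) (n j : ℕ) : ℂ :=
  (-2 * I * z) ^ j / j.factorial * (((n.descFactorial j : ℝ) / (2 * n).descFactorial j : ℝ) : ℂ)

section sphHankelTail

variable (z : ℂ)

lemma sphHankelTail_of_lt {n j : ℕ} (h : n < j) : sphHankelTail z n j = 0 := by
  simp [sphHankelTail, Nat.descFactorial_eq_zero_iff_lt.2 h]

lemma norm_sphHankelTail_le (n j : ℕ) : ‖sphHankelTail z n j‖ ≤ ‖z‖ ^ j / j.factorial := by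
  have hratio := descFactorial_div_descFactorial_two_mul_le n j
  rw [sphHankelTail, norm_mul, norm_div, Complex.norm_real, Real.norm_of_nonneg (by positivity)]
  calc ‖(-2 * I * z) ^ j‖ / ‖(j.factorial : ℂ)‖ * ((n.descFactorial j : ℝ) / (2 * n).descFactorial j)
      ≤ (2 * ‖z‖) ^ j / j.factorial * 2⁻¹ ^ j := by
        gcongr <;> simp
    _ = ‖z‖ ^ j / j.factorial := by
        rw [mul_pow, div_mul_eq_mul_div, mul_right_comm, ← mul_pow]
        norm_num

lemma tendsto_sum_sphHankelTail :
    Tendsto (fun n => ∑ j ∈ range (n + 1), sphHankelTail z n j) atTop (𝓝 (exp (-I * z))) := by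
  have hlim (j : ℕ) : Tendsto (fun n => sphHankelTail z n j) atTop
      (𝓝 ((-I * z) ^ j / j.factorial)) := by
    have h := ((continuous_ofReal.tendsto _).comp
      (tendsto_descFactorial_div_descFactorial_two_mul j)).const_mul ((-2 * I * z) ^ j / j.factorial)
    have hval : (-2 * I * z) ^ j / j.factorial * ((2⁻¹ ^ j : ℝ) : ℂ) =
        (-I * z) ^ j / j.factorial := by
      push_cast
      rw [div_mul_eq_mul_div, ← mul_pow]
      ring_nf
    rwa [hval] at h
  have h := tendsto_tsum_of_dominated_convergence (Real.summable_pow_div_factorial ‖z‖) hlim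
    (.of_forall fun n j => norm_sphHankelTail_le z n j)
  rw [exp_eq_exp_ℂ, NormedSpace.exp_eq_tsum_div]
  refine h.congr fun n => tsum_eq_sum fun j hj => sphHankelTail_of_lt z ?_
  simpa using hj

end sphHankelTail

lemma sphHankel_term_eq_mul_sphHankelTail {z : ℂ} (hz : z ≠ 0) (k j : ℕ) :
    I ^ k / (k.factorial * (2 * z) ^ k) *
        ((k + j + k).factorial / (k + j - k).factorial : ℂ) =
      I ^ (k + j) * (2 * (k + j)).factorial / ((k + j).factorial * (2 * z) ^ (k + j)) *
        sphHankelTail z (k + j) j := by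
  have hfac := Nat.factorial_mul_descFactorial (Nat.le_add_left j k)
  have hfac2 := Nat.factorial_mul_descFactorial (show j ≤ 2 * (k + j) by omega)
  rw [Nat.add_sub_cancel] at hfac
  rw [show 2 * (k + j) - j = k + j + k by omega] at hfac2
  have hI : I ^ j * (-2 * I * z) ^ j = (2 * z) ^ j := by
    rw [← mul_pow]; congr 1; linear_combination (-2 * z) * I_sq
  have hD : ((k + j).descFactorial j : ℂ) ≠ 0 := by
    simp [Nat.descFactorial_eq_zero_iff_lt]
  have hD2 : ((2 * (k + j)).descFactorial j : ℂ) ≠ 0 := by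
    simp [Nat.descFactorial_eq_zero_iff_lt]; omega
  rw [sphHankelTail, show k + j - k = j by omega, ← hfac, ← hfac2]
  push_cast
  rw [pow_add, pow_add]
  field_simp
  linear_combination -((k + j + k).factorial / (k.factorial * j.factorial) : ℂ) * hI

lemma sphHankel_eq_mul_sum_sphHankelTail {z : ℂ} (hz : z ≠ 0) (n : ℕ) :
    sphHankel n z = (-I) ^ (n + 1) * (exp (I * z) / z) *
      (I ^ n * (2 * n).factorial / (n.factorial * (2 * z) ^ n)) *
        ∑ j ∈ range (n + 1), sphHankelTail z n j := by
  rw [sphHankel, ← sum_range_reflect (sphHankelTail z n), mul_sum, mul_sum]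
  refine sum_congr rfl fun k hk => ?_
  obtain ⟨j, rfl⟩ := Nat.exists_eq_add_of_le (Nat.lt_succ_iff.1 (mem_range.1 hk))
  rw [show k + j + 1 - 1 - k = j by omega, sphHankel_term_eq_mul_sphHankelTail hz k j]
  ring

lemma eventually_sphHankel_ne_zero {z : ℂ} (hz : z ≠ 0) : ∀ᶠ n in atTop, sphHankel n z ≠ 0 := by
  filter_upwards [(tendsto_sum_sphHankelTail z).eventually_ne (exp_ne_zero _)] with n hn
  rw [sphHankel_eq_mul_sum_sphHankelTail hz n]
  exact mul_ne_zero (by simp [hz, Nat.factorial_ne_zero]) hn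

theorem zfun_deriv_div_sphHankel_asymptotic (z : ℂ) (hz : z ≠ 0) :
    ∃ (N₀ : ℕ) (C : ℝ), 0 < C ∧ ∀ n : ℕ, N₀ ≤ n →
      sphHankel n z ≠ 0 ∧
      ‖z * deriv (zfun n) z / sphHankel n z - (n : ℂ) * ((n : ℂ) + 1) + z ^ 2‖ ≤ C / n := by
  obtain ⟨N₀, hN₀⟩ := eventually_atTop.1 (eventually_sphHankel_ne_zero hz)
  refine ⟨N₀, 1, one_pos, fun n hn => ⟨hN₀ n hn, ?_⟩⟩
  rw [mul_deriv_zfun n hz, mul_div_cancel_right₀ _ (hN₀ n hn), sub_sub_cancel_left,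
    neg_add_cancel, norm_zero]
  positivity
end

section
/- Let w₁, w₂ ∈ ℂ with w₁ ≠ 0 and w₂ ≠ 0, and define δ_n(w) = z_n^{(1)}(w)/h_n^{(1)}(w) whenever h_n^{(1)}(w) ≠ 0. Then there exist N₀ ∈ ℕ and C > 0 such that for all integers n ≥ N₀ one has h_n^{(1)}(w₁) ≠ 0, h_n^{(1)}(w₂) ≠ 0, and |δ_n(w₁) − δ_n(w₂)| ≤ C/n; that is, δ_n(w₁) − δ_n(w₂) = O(1/n) as n → ∞. -/
open Complex

/-!
Write `h_n(z) = (-i)^(n+1) e^(iz)/z · S_n(z)` with `S_n` the Rayleigh sum and `T_n = -z S_n'`.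
Then `z_n/h_n = iz - T_n/S_n`. Reversing the summation index, `S_n(z) = a_n(z) P_n(x)` with
`x = -iz`, `a_n` the top coefficient and `P_n(x) = ∑_j ρ_{n,j} x^j/j!`,
`ρ_{n,j} = ∏_{i<j} 2(n-i)/(2n-i)` (the reverse Bessel polynomial normalised by `P_n(0) = 1`).
This gives `z_n/h_n + n = (U_n(x) - x P_n(x))/P_n(x)` with `U_n(x) = x P_n'(x)`.
Since `ρ_{n,j} → 1` for each fixed `j`, dominated convergence gives `P_n(x) → e^x ≠ 0`, while
`|ρ_{n,j} - ρ_{n,j+1}| ≤ j/n` gives `|U_n(x) - x P_n(x)| ≤ |x| e^(2|x|)/n`.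
Hence `z_n/h_n = -n + O(1/n)` at every fixed `z ≠ 0`.
-/

open Finset Filter Topology Nat

noncomputable def rayleighCoeff (n k : ℕ) (z : ℂ) : ℂ :=
  (I ^ k / ((k ! : ℂ) * (2 * z) ^ k)) * (((n + k)! : ℂ) / ((n - k)! : ℂ))

noncomputable def rayleighSum (n : ℕ) (z : ℂ) : ℂ :=
  ∑ k ∈ range (n + 1), rayleighCoeff n k z

noncomputable def rayleighEulerSum (n : ℕ) (z : ℂ) : ℂ :=
  ∑ k ∈ range (n + 1), (k : ℂ) * rayleighCoeff n k z

theorem sphHankel_eq (n : ℕ) (z : ℂ) :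
    sphHankel n z = (-I) ^ (n + 1) * (exp (I * z) / z) * rayleighSum n z := rfl

theorem hasDerivAt_rayleighCoeff (n k : ℕ) {z : ℂ} (hz : z ≠ 0) :
    HasDerivAt (rayleighCoeff n k) (-(k * rayleighCoeff n k z) / z) z := by
  set c : ℂ := I ^ k / (k ! * 2 ^ k) * ((n + k)! / (n - k)!)
  have hc : rayleighCoeff n k = fun z => c * z ^ (-(k : ℤ)) := by
    funext z
    simp only [rayleighCoeff, c, zpow_neg, zpow_natCast, mul_pow]
    ring
  rw [hc]
  refine ((hasDerivAt_zpow (-(k : ℤ)) z (Or.inl hz)).const_mul c).congr_deriv ?_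
  rw [zpow_sub_one₀ hz]
  push_cast
  ring

theorem hasDerivAt_rayleighSum (n : ℕ) {z : ℂ} (hz : z ≠ 0) :
    HasDerivAt (rayleighSum n) (-rayleighEulerSum n z / z) z := by
  refine (HasDerivAt.fun_sum fun k (_ : k ∈ range (n + 1)) =>
    hasDerivAt_rayleighCoeff n k hz).congr_deriv ?_
  simp only [rayleighEulerSum, ← sum_div, sum_neg_distrib]

theorem zfun_eq (n : ℕ) {z : ℂ} (hz : z ≠ 0) :
    zfun n z = (-I) ^ (n + 1) * (exp (I * z) / z) *
      (I * z * rayleighSum n z - rayleighEulerSum n z) := by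
  have hexp : HasDerivAt (fun z => exp (I * z) / z) (exp (I * z) * (I * z - 1) / z ^ 2) z := by
    refine ((((hasDerivAt_id z).const_mul I).cexp).div (hasDerivAt_id z) hz).congr_deriv ?_
    simp only [id, mul_one]
    ring
  have hderiv := ((hexp.const_mul ((-I) ^ (n + 1))).mul (hasDerivAt_rayleighSum n hz)).deriv
  rw [zfun, show sphHankel n = (fun z => (-I) ^ (n + 1) * (exp (I * z) / z)) * rayleighSum n
    from rfl, hderiv]
  simp only [Pi.mul_apply]
  field_simp
  ring

theorem zfun_div_sphHankel (n : ℕ) {z : ℂ} (hz : z ≠ 0) (hS : rayleighSum n z ≠ 0) :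
    zfun n z / sphHankel n z = I * z - rayleighEulerSum n z / rayleighSum n z := by
  rw [zfun_eq n hz, sphHankel_eq, mul_div_mul_left _ _ (by simp [hz, exp_ne_zero])]
  field_simp

theorem rayleighCoeff_self_ne_zero (n : ℕ) {z : ℂ} (hz : z ≠ 0) :
    rayleighCoeff n n z ≠ 0 := by
  simp [rayleighCoeff, hz, I_ne_zero, factorial_ne_zero]

noncomputable def besselWeight (n j : ℕ) : ℝ :=
  ∏ i ∈ range j, 2 * ((n : ℝ) - i) / (2 * n - i)

theorem besselWeight_zero (n : ℕ) : besselWeight n 0 = 1 := prod_range_zero _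

theorem besselWeight_succ (n j : ℕ) :
    besselWeight n (j + 1) = besselWeight n j * (2 * ((n : ℝ) - j) / (2 * n - j)) :=
  prod_range_succ _ _

theorem rayleighCoeff_self_sub_succ {z : ℂ} (hz : z ≠ 0) {n j : ℕ} (hj : j < n) :
    rayleighCoeff n (n - (j + 1)) z =
      rayleighCoeff n (n - j) z * (-I * z / (j + 1)) * (2 * ((n : ℂ) - j) / (2 * n - j)) := by
  obtain ⟨m, rfl⟩ : ∃ m, n = m + j + 1 := ⟨n - j - 1, by omega⟩
  have e1 : m + j + 1 - (j + 1) = m := by omega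
  have e2 : m + j + 1 - j = m + 1 := by omega
  have e3 : m + j + 1 - m = j + 1 := by omega
  have e4 : m + j + 1 - (m + 1) = j := by omega
  simp only [rayleighCoeff, e1, e2, e3, e4, ← add_assoc, factorial_succ]
  push_cast
  have : 2 * ((m : ℂ) + j + 1) - j ≠ 0 := by
    rw [show 2 * ((m : ℂ) + j + 1) - j = (2 * m + j + 2 : ℕ) by push_cast; ring]
    exact Nat.cast_ne_zero.2 (by omega)
  field_simp
  ring_nf
  simp only [I_sq]
  ring

theorem rayleighCoeff_self_sub {z : ℂ} (hz : z ≠ 0) {n j : ℕ} (hj : j ≤ n) :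
    rayleighCoeff n (n - j) z =
      rayleighCoeff n n z * (besselWeight n j * ((-I * z) ^ j / j !)) := by
  induction j with
  | zero => simp [besselWeight_zero]
  | succ j ih =>
    rw [rayleighCoeff_self_sub_succ hz hj, ih (by omega), besselWeight_succ, factorial_succ]
    push_cast
    field_simp
    ring

noncomputable def besselExpSum (n : ℕ) (x : ℂ) : ℂ :=
  ∑ j ∈ range (n + 1), besselWeight n j * (x ^ j / j !)

noncomputable def besselEulerSum (n : ℕ) (x : ℂ) : ℂ :=
  ∑ j ∈ range (n + 1), j * (besselWeight n j * (x ^ j / j !))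

theorem rayleighSum_eq {z : ℂ} (hz : z ≠ 0) (n : ℕ) :
    rayleighSum n z = rayleighCoeff n n z * besselExpSum n (-I * z) := by
  rw [rayleighSum, ← sum_range_reflect, besselExpSum, mul_sum]
  refine sum_congr rfl fun j hj => ?_
  rw [add_tsub_cancel_right, rayleighCoeff_self_sub hz (mem_range_succ_iff.1 hj)]

theorem rayleighEulerSum_eq {z : ℂ} (hz : z ≠ 0) (n : ℕ) :
    rayleighEulerSum n z =
      rayleighCoeff n n z * (n * besselExpSum n (-I * z) - besselEulerSum n (-I * z)) := by
  rw [rayleighEulerSum, ← sum_range_reflect, besselExpSum, besselEulerSum, mul_sum,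
    ← sum_sub_distrib, mul_sum]
  refine sum_congr rfl fun j hj => ?_
  have hj := mem_range_succ_iff.1 hj
  rw [add_tsub_cancel_right, rayleighCoeff_self_sub hz hj, Nat.cast_sub hj]
  ring

theorem sphHankel_ne_zero {z : ℂ} (hz : z ≠ 0) {n : ℕ} (hP : besselExpSum n (-I * z) ≠ 0) :
    sphHankel n z ≠ 0 := by
  rw [sphHankel_eq, rayleighSum_eq hz]
  exact mul_ne_zero (mul_ne_zero (pow_ne_zero _ (neg_ne_zero.2 I_ne_zero))
    (div_ne_zero (exp_ne_zero _) hz)) (mul_ne_zero (rayleighCoeff_self_ne_zero n hz) hP)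

theorem zfun_div_sphHankel_add {z : ℂ} (hz : z ≠ 0) {n : ℕ}
    (hP : besselExpSum n (-I * z) ≠ 0) :
    zfun n z / sphHankel n z + n =
      (besselEulerSum n (-I * z) - -I * z * besselExpSum n (-I * z)) / besselExpSum n (-I * z) := by
  have ha := rayleighCoeff_self_ne_zero n hz
  rw [zfun_div_sphHankel n hz (by rw [rayleighSum_eq hz]; exact mul_ne_zero ha hP),
    rayleighSum_eq hz, rayleighEulerSum_eq hz]
  rw [show I * z = -(-I * z) by ring]
  generalize -I * z = x at hP ⊢
  field_simp
  ring

theorem besselWeight_of_lt {n j : ℕ} (h : n < j) : besselWeight n j = 0 :=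
  prod_eq_zero (mem_range.2 h) (by simp)

theorem besselWeight_mem_Icc (n j : ℕ) : besselWeight n j ∈ Set.Icc 0 1 := by
  rcases lt_or_ge n j with h | h
  · simp [besselWeight_of_lt h]
  have hfac : ∀ i ∈ range j, 0 ≤ 2 * ((n : ℝ) - i) / (2 * n - i) ∧
      2 * ((n : ℝ) - i) / (2 * n - i) ≤ 1 := fun i hi => by
    have : (i : ℝ) < n := by exact_mod_cast (mem_range.1 hi).trans_le h
    exact ⟨by apply div_nonneg <;> linarith, div_le_one_of_le₀ (by linarith) (by linarith)⟩
  exact ⟨prod_nonneg fun i hi => (hfac i hi).1, prod_le_one (fun i hi => (hfac i hi).1)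
    fun i hi => (hfac i hi).2⟩

theorem abs_besselWeight_sub_succ_le {n : ℕ} (hn : 0 < n) (j : ℕ) :
    |besselWeight n j - besselWeight n (j + 1)| ≤ j / n := by
  rcases lt_or_ge n j with h | h
  · rw [besselWeight_of_lt h, besselWeight_of_lt (h.trans j.lt_succ_self), sub_zero, abs_zero]
    positivity
  have hj : (j : ℝ) ≤ n := by exact_mod_cast h
  have hn' : (0 : ℝ) < n := by exact_mod_cast hn
  have hden : (n : ℝ) ≤ 2 * n - j := by linarith
  obtain ⟨hρ₀, hρ₁⟩ := besselWeight_mem_Icc n j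
  have hdiff :
      besselWeight n j - besselWeight n (j + 1) = besselWeight n j * (j / (2 * n - j)) := by
    rw [besselWeight_succ]
    field_simp [(hn'.trans_le hden).ne']
    ring
  have hfrac : 0 ≤ (j : ℝ) / (2 * n - j) := div_nonneg j.cast_nonneg (hn'.le.trans hden)
  rw [hdiff, abs_of_nonneg (mul_nonneg hρ₀ hfrac)]
  calc besselWeight n j * (j / (2 * n - j)) ≤ 1 * (j / n) := by gcongr
    _ = j / n := one_mul _

theorem tendsto_besselWeight (j : ℕ) :
    Tendsto (fun n => besselWeight n j) atTop (𝓝 1) := by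
  rw [← prod_const_one (s := range j)]
  refine tendsto_finsetProd _ fun i _ => ?_
  have h : Tendsto (fun n : ℕ => (2 - 2 * (i / (n : ℝ))) / (2 - i / (n : ℝ))) atTop
      (𝓝 ((2 - 2 * 0) / (2 - 0))) :=
    ((tendsto_const_div_atTop_nhds_zero_nat (i : ℝ)).const_mul 2 |>.const_sub 2).div
      ((tendsto_const_div_atTop_nhds_zero_nat (i : ℝ)).const_sub 2) (by norm_num)
  rw [show ((2 : ℝ) - 2 * 0) / (2 - 0) = 1 by norm_num] at h
  refine h.congr' ((eventually_gt_atTop 0).mono fun n hn => ?_)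
  have : (0 : ℝ) < n := by exact_mod_cast hn
  field_simp

theorem tendsto_besselExpSum (x : ℂ) :
    Tendsto (fun n => besselExpSum n x) atTop (𝓝 (exp x)) := by
  have htsum : (fun n => besselExpSum n x) =
      fun n => ∑' j, (besselWeight n j : ℂ) * (x ^ j / j !) := by
    funext n
    refine (tsum_eq_sum fun j hj => ?_).symm
    rw [besselWeight_of_lt (by simpa using hj), ofReal_zero, zero_mul]
  rw [htsum, exp_eq_exp_ℂ, NormedSpace.exp_eq_tsum_div]
  refine tendsto_tsum_of_dominated_convergence (Real.summable_pow_div_factorial ‖x‖)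
    (fun j => ?_) (Eventually.of_forall fun n j => ?_)
  · simpa using ((continuous_ofReal.tendsto 1).comp (tendsto_besselWeight j)).mul_const
      (x ^ j / j !)
  · obtain ⟨hρ₀, hρ₁⟩ := besselWeight_mem_Icc n j
    rw [norm_mul, norm_real, Real.norm_of_nonneg hρ₀, norm_div, norm_pow, norm_natCast]
    exact mul_le_of_le_one_left (by positivity) hρ₁

theorem besselEulerSum_sub_mul_besselExpSum (n : ℕ) (x : ℂ) :
    besselEulerSum n x - x * besselExpSum n x =
      ∑ j ∈ range (n + 1),
        (besselWeight n (j + 1) - besselWeight n j : ℝ) * (x ^ (j + 1) / j !) := by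
  have hshift : besselEulerSum n x =
      ∑ j ∈ range (n + 1), (besselWeight n (j + 1) : ℂ) * (x ^ (j + 1) / j !) := by
    rw [besselEulerSum, sum_range_succ', sum_range_succ _ n, besselWeight_of_lt n.lt_succ_self]
    simp only [CharP.cast_eq_zero, zero_mul, add_zero, ofReal_zero]
    refine sum_congr rfl fun j _ => ?_
    rw [factorial_succ]
    push_cast
    field_simp
  rw [hshift, besselExpSum, mul_sum, ← sum_sub_distrib]
  refine sum_congr rfl fun j _ => ?_
  push_cast
  ring

theorem norm_besselEulerSum_sub_le {n : ℕ} (hn : 0 < n) (x : ℂ) :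
    ‖besselEulerSum n x - x * besselExpSum n x‖ ≤ ‖x‖ * Real.exp (2 * ‖x‖) / n := by
  have hterm : ∀ j ∈ range (n + 1),
      ‖((besselWeight n (j + 1) - besselWeight n j : ℝ) : ℂ) * (x ^ (j + 1) / j !)‖ ≤
        ‖x‖ / n * ((2 * ‖x‖) ^ j / j !) := fun j _ => by
    have hj : (j : ℝ) ≤ 2 ^ j := by exact_mod_cast j.lt_two_pow_self.le
    rw [norm_mul, norm_real, Real.norm_eq_abs, abs_sub_comm, norm_div, norm_pow, norm_natCast]
    calc |besselWeight n j - besselWeight n (j + 1)| * (‖x‖ ^ (j + 1) / j !)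
        ≤ j / n * (‖x‖ ^ (j + 1) / j !) := by gcongr; exact abs_besselWeight_sub_succ_le hn j
      _ ≤ 2 ^ j / n * (‖x‖ ^ (j + 1) / j !) := by gcongr
      _ = ‖x‖ / n * ((2 * ‖x‖) ^ j / j !) := by ring
  calc _ ≤ ∑ j ∈ range (n + 1), ‖x‖ / n * ((2 * ‖x‖) ^ j / j !) := by
        rw [besselEulerSum_sub_mul_besselExpSum]
        exact (norm_sum_le _ _).trans (sum_le_sum hterm)
    _ ≤ ‖x‖ / n * Real.exp (2 * ‖x‖) := by
        rw [← mul_sum]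
        gcongr
        exact Real.sum_le_exp_of_nonneg (by positivity) _
    _ = ‖x‖ * Real.exp (2 * ‖x‖) / n := by ring

theorem exists_eventually_norm_zfun_div_sphHankel_add_le {w : ℂ} (hw : w ≠ 0) :
    ∃ C, 0 < C ∧ ∀ᶠ n : ℕ in atTop,
      sphHankel n w ≠ 0 ∧ ‖zfun n w / sphHankel n w + n‖ ≤ C / n := by
  set x := -I * w
  have hx : 0 < ‖x‖ := norm_pos_iff.2 (mul_ne_zero (neg_ne_zero.2 I_ne_zero) hw)
  have hexp : 0 < ‖exp x‖ := norm_pos_iff.2 (exp_ne_zero x)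
  have hP : ∀ᶠ n in atTop, ‖exp x‖ / 2 < ‖besselExpSum n x‖ :=
    (tendsto_besselExpSum x).norm.eventually (lt_mem_nhds (half_lt_self hexp))
  refine ⟨2 * ‖x‖ * Real.exp (2 * ‖x‖) / ‖exp x‖, by positivity, ?_⟩
  filter_upwards [hP, eventually_gt_atTop 0] with n hPn hn
  have hP₀ : besselExpSum n x ≠ 0 := norm_pos_iff.1 ((half_pos hexp).trans hPn)
  refine ⟨sphHankel_ne_zero hw hP₀, ?_⟩
  rw [zfun_div_sphHankel_add hw hP₀, norm_div]
  calc _ ≤ ‖x‖ * Real.exp (2 * ‖x‖) / n / (‖exp x‖ / 2) :=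
        div_le_div₀ (by positivity) (norm_besselEulerSum_sub_le hn x) (by positivity) hPn.le
    _ = 2 * ‖x‖ * Real.exp (2 * ‖x‖) / ‖exp x‖ / n := by ring

theorem delta_diff_asymptotic (w₁ w₂ : ℂ) (hw₁ : w₁ ≠ 0) (hw₂ : w₂ ≠ 0) :
    ∃ (N₀ : ℕ) (C : ℝ), 0 < C ∧ ∀ n : ℕ, N₀ ≤ n →
      sphHankel n w₁ ≠ 0 ∧ sphHankel n w₂ ≠ 0 ∧
      ‖zfun n w₁ / sphHankel n w₁ - zfun n w₂ / sphHankel n w₂‖ ≤ C / n := by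
  obtain ⟨C₁, hC₁, h₁⟩ := exists_eventually_norm_zfun_div_sphHankel_add_le hw₁
  obtain ⟨C₂, hC₂, h₂⟩ := exists_eventually_norm_zfun_div_sphHankel_add_le hw₂
  obtain ⟨N₀, hN₀⟩ := eventually_atTop.1 (h₁.and h₂)
  refine ⟨N₀, C₁ + C₂, add_pos hC₁ hC₂, fun n hn => ?_⟩
  obtain ⟨⟨hne₁, hle₁⟩, hne₂, hle₂⟩ := hN₀ n hn
  refine ⟨hne₁, hne₂, ?_⟩
  calc _ = ‖(zfun n w₁ / sphHankel n w₁ + n) - (zfun n w₂ / sphHankel n w₂ + n)‖ := by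
        rw [add_sub_add_right_eq_sub]
    _ ≤ C₁ / n + C₂ / n := (norm_sub_le _ _).trans (add_le_add hle₁ hle₂)
    _ = (C₁ + C₂) / n := by ring
end

section
/- Let κ₀ ∈ ℂ with κ₀ ≠ 0 and let R > 0. Then there exist N₀ ∈ ℕ and C > 0 such that for every integer n ≥ N₀: h_n^{(1)}(κ₀R) ≠ 0, z_n^{(1)}(κ₀R) ≠ 0, the function κ ↦ κ·h_n^{(1)}(κR)/z_n^{(1)}(κR) is complex differentiable at κ₀, and its derivative G_n′(κ₀) satisfies |G_n′(κ₀) + 1/n| ≤ C/n²; that is, (κ·h_n^{(1)}(κR)/z_n^{(1)}(κR))′ evaluated at κ₀ equals −1/n + O(1/n²) as n → ∞. -/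
/-!
Pulling the growth out of the Rayleigh sum gives `h_n(z) = c_n F_n(z) / z^(n+1)`, where
`F_n(z) = e^{iz} ∑_{j ≤ n} r_{n,j} (-iz)^j / j!` and `r_{n,j} = 2^j n^(j) / (2n)^(j)` (falling
factorials) satisfies `0 ≤ 1 - r_{n,j} ≤ j² / (2n)`. Comparing with the series of `e^{-iz}` shows
`F_n → 1` uniformly on discs at rate `O(1/n)`, so `F_n'` and `F_n''` are `O(1/n)` by Cauchy's
estimates. In terms of `F_n`, `κ h_n(κR) / z_n(κR) = g_n(κR) / R` with
`g_n(w) = w F_n(w) / (w F_n'(w) - n F_n(w))`, and `g_n'(w) + 1/n = n⁻² (F_n'(w) α_n + F_n''(w) β_n)`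
with `α_n, β_n` convergent; hence it is `O(1/n³)`.
-/

open Complex

open Finset Filter Asymptotics Topology Metric
open scoped Nat

lemma norm_deriv_le_and_norm_deriv_deriv_le {f : ℂ → ℂ} (hf : Differentiable ℂ f) {c a : ℂ}
    {B : ℝ} (h : ∀ z ∈ sphere c 1, ‖f z - a‖ ≤ B) :
    ‖deriv f c‖ ≤ B ∧ ‖deriv (deriv f) c‖ ≤ 2 * B := by
  have hg : DiffContOnCl ℂ (fun z => f z - a) (ball c 1) := (hf.sub_const a).diffContOnCl
  have hderiv : deriv (fun z => f z - a) = deriv f := funext fun z => deriv_sub_const a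
  constructor
  · simpa [hderiv] using norm_deriv_le_of_forall_mem_sphere_norm_le one_pos hg h
  · simpa [iteratedDeriv_succ, hderiv] using
      norm_iteratedDeriv_le_of_forall_mem_sphere_norm_le 2 one_pos hg h

noncomputable def dtnRatio (ν : ℂ) (F : ℂ → ℂ) (w : ℂ) : ℂ :=
  w * F w / (w * deriv F w - ν * F w)

lemma hasDerivAt_dtnRatio {ν : ℂ} {F : ℂ → ℂ} {w : ℂ} (hF : DifferentiableAt ℂ F w)
    (hF' : DifferentiableAt ℂ (deriv F) w) (hD : w * deriv F w - ν * F w ≠ 0) :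
    HasDerivAt (dtnRatio ν F) ((w ^ 2 * (deriv F w ^ 2 - F w * deriv (deriv F) w) -
      ν * F w ^ 2) / (w * deriv F w - ν * F w) ^ 2) w := by
  have hnum : HasDerivAt (fun x => x * F x) (1 * F w + w * deriv F w) w :=
    (hasDerivAt_id' w).mul hF.hasDerivAt
  have hden : HasDerivAt (fun x => x * deriv F x - ν * F x)
      (1 * deriv F w + w * deriv (deriv F) w - ν * deriv F w) w :=
    ((hasDerivAt_id' w).mul hF'.hasDerivAt).sub (hF.hasDerivAt.const_mul ν)
  refine (hnum.div hden hD).congr_deriv ?_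
  field_simp
  ring

lemma dtnRatio_deriv_add_inv_eq {w p q s ν : ℂ} (hν : ν ≠ 0) (hD : w * q - ν * p ≠ 0) :
    (w ^ 2 * (q ^ 2 - p * s) - ν * p ^ 2) / (w * q - ν * p) ^ 2 + ν⁻¹ =
      ν⁻¹ ^ 2 * (q * ((w ^ 2 * (q + ν⁻¹ * q) - 2 * w * p) / (w * ν⁻¹ * q - p) ^ 2) +
        s * (-w ^ 2 * p / (w * ν⁻¹ * q - p) ^ 2)) := by
  have hQ : w * ν⁻¹ * q - p = (w * q - ν * p) / ν := by field_simp
  rw [hQ]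
  rw [mul_comm ν p] at hD ⊢
  field_simp
  ring

lemma dtnRatio_deriv_asymptotics (w : ℂ) {p q s : ℕ → ℂ} (hp : Tendsto p atTop (𝓝 1))
    (hq : q =O[atTop] fun n : ℕ => (n : ℂ)⁻¹) (hs : s =O[atTop] fun n : ℕ => (n : ℂ)⁻¹) :
    (∀ᶠ n : ℕ in atTop, w * q n - n * p n ≠ 0) ∧
    (fun n : ℕ => (w ^ 2 * (q n ^ 2 - p n * s n) - n * p n ^ 2) / (w * q n - n * p n) ^ 2 +
      (n : ℂ)⁻¹) =O[atTop] fun n : ℕ => (n : ℂ)⁻¹ ^ 3 := by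
  set t : ℕ → ℂ := fun n => (n : ℂ)⁻¹
  have ht : Tendsto t atTop (𝓝 0) := tendsto_inv_atTop_nhds_zero_nat
  have hq0 : Tendsto q atTop (𝓝 0) := hq.trans_tendsto ht
  set Q : ℕ → ℂ := fun n => w * t n * q n - p n
  have hQ : Tendsto Q atTop (𝓝 (-1)) := by simpa using ((ht.const_mul w).mul hq0).sub hp
  have hD : ∀ᶠ n : ℕ in atTop, (n : ℂ) ≠ 0 ∧ w * q n - n * p n ≠ 0 := by
    filter_upwards [eventually_ne_atTop 0, hQ.eventually_ne (by norm_num : (-1 : ℂ) ≠ 0)]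
      with n hn hQn
    have hn' : (n : ℂ) ≠ 0 := Nat.cast_ne_zero.mpr hn
    have hDQ : w * q n - n * p n = n * Q n := by simp only [Q, t]; field_simp
    exact ⟨hn', hDQ ▸ mul_ne_zero hn' hQn⟩
  set α : ℕ → ℂ := fun n => (w ^ 2 * (q n + t n * q n) - 2 * w * p n) / Q n ^ 2
  set β : ℕ → ℂ := fun n => -w ^ 2 * p n / Q n ^ 2
  have hα : α =O[atTop] fun _ => (1 : ℂ) :=
    ((((hq0.add (ht.mul hq0)).const_mul (w ^ 2)).sub (hp.const_mul (2 * w))).div (hQ.pow 2)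
      (by norm_num)).isBigO_one ℂ
  have hβ : β =O[atTop] fun _ => (1 : ℂ) :=
    ((hp.const_mul (-w ^ 2)).div (hQ.pow 2) (by norm_num)).isBigO_one ℂ
  have hsum : (fun n => q n * α n + s n * β n) =O[atTop] t := by
    simpa using (hq.mul hα).add (hs.mul hβ)
  refine ⟨hD.mono fun n hn => hn.2, ((isBigO_refl (fun n => t n ^ 2) atTop).mul hsum).congr'
    (hD.mono fun n hn => (dtnRatio_deriv_add_inv_eq hn.1 hn.2).symm) (.of_forall fun n => by ring)⟩

noncomputable def rayleighRatio (n j : ℕ) : ℝ :=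
  2 ^ j * n.descFactorial j / (2 * n).descFactorial j

lemma rayleighRatio_zero (n : ℕ) : rayleighRatio n 0 = 1 := by
  simp [rayleighRatio]

lemma rayleighRatio_succ {n j : ℕ} (h : j < n) :
    rayleighRatio n (j + 1) = rayleighRatio n j * (2 * (n - j) / (2 * n - j)) := by
  have h2n : (0 : ℝ) < (2 * n).descFactorial j := by
    exact_mod_cast Nat.descFactorial_pos.mpr (by omega)
  have hj : (0 : ℝ) < 2 * n - j := by
    have : (j : ℝ) < n := by exact_mod_cast h
    linarith
  simp only [rayleighRatio, Nat.descFactorial_succ]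
  push_cast [Nat.cast_sub h.le, Nat.cast_sub (show j ≤ 2 * n by omega)]
  field_simp
  ring

lemma rayleighRatio_nonneg (n j : ℕ) : 0 ≤ rayleighRatio n j := by
  unfold rayleighRatio; positivity

lemma rayleighRatio_le_one {n j : ℕ} (h : j ≤ n) : rayleighRatio n j ≤ 1 := by
  induction j with
  | zero => simp [rayleighRatio_zero]
  | succ j ih =>
    have hjn : (j : ℝ) < n := by exact_mod_cast h
    rw [rayleighRatio_succ h]
    refine mul_le_one₀ (ih (by omega)) (div_nonneg (by linarith) (by linarith)) ?_
    rw [div_le_one (by linarith)]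
    linarith [(Nat.cast_nonneg j : (0 : ℝ) ≤ j)]

lemma one_sub_rayleighRatio_le {n j : ℕ} (h : j ≤ n) :
    1 - rayleighRatio n j ≤ j ^ 2 / (2 * n) := by
  induction j with
  | zero => simp [rayleighRatio_zero]
  | succ j ih =>
    have hjn : (j : ℝ) < n := by exact_mod_cast h
    have hj0 : (0 : ℝ) ≤ j := Nat.cast_nonneg j
    have hn : (0 : ℝ) < n := by linarith
    have hd : (2 * n - j : ℝ) ≠ 0 := by linarith
    set q : ℝ := 2 * (n - j) / (2 * n - j)
    have hq : 1 - q ≤ j / n := by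
      have : 1 - q = j / (2 * n - j) := by
        simp only [q]; field_simp; ring
      rw [this]
      exact div_le_div_of_nonneg_left hj0 (by linarith) (by linarith)
    have hr := rayleighRatio_le_one (n := n) (j := j) (by omega)
    have hq1 : q ≤ 1 := by rw [div_le_one (by linarith)]; linarith
    rw [rayleighRatio_succ h]
    have hsq : (j : ℝ) ^ 2 / (2 * n) + j / n ≤ ((j + 1 : ℕ) : ℝ) ^ 2 / (2 * n) := by
      rw [div_add_div _ _ (by positivity) (by positivity),
        div_le_div_iff₀ (by positivity) (by positivity)]
      push_cast
      nlinarith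
    nlinarith [ih (by omega), rayleighRatio_nonneg n j]

noncomputable def reducedHankel (n : ℕ) (z : ℂ) : ℂ :=
  exp (I * z) * ∑ j ∈ range (n + 1), (-I * z) ^ j * rayleighRatio n j / j !

noncomputable def hankelCoeff (n : ℕ) : ℂ := I ^ n * (2 * n)! / (n ! * 2 ^ n)

lemma hankelCoeff_ne_zero (n : ℕ) : hankelCoeff n ≠ 0 := by
  unfold hankelCoeff
  have := Nat.factorial_ne_zero n
  have := Nat.factorial_ne_zero (2 * n)
  simp [I_ne_zero, *]

lemma sphHankel_summand_eq (k j : ℕ) {z : ℂ} (hz : z ≠ 0) :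
    I ^ k / (k ! * (2 * z) ^ k) * ((k + j + k)! / j !) =
      hankelCoeff (k + j) * ((-I * z) ^ j * rayleighRatio (k + j) j / j !) / z ^ (k + j) := by
  have h1 := Nat.factorial_mul_descFactorial (show j ≤ k + j by omega)
  have h2 := Nat.factorial_mul_descFactorial (show j ≤ 2 * (k + j) by omega)
  rw [show k + j - j = k by omega] at h1
  rw [show 2 * (k + j) - j = k + j + k by omega] at h2
  have h1' : ((k ! : ℕ) : ℂ) * (k + j).descFactorial j = (k + j)! := by exact_mod_cast h1
  have h2' : (((k + j + k)! : ℕ) : ℂ) * (2 * (k + j)).descFactorial j = (2 * (k + j))! := by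
    exact_mod_cast h2
  have hI : (-I * z) ^ j = (I ^ j)⁻¹ * z ^ j := by rw [mul_pow, ← inv_I, inv_pow]
  have hd : ((2 * (k + j)).descFactorial j : ℂ) ≠ 0 := by
    exact_mod_cast (Nat.descFactorial_pos.mpr (by omega)).ne'
  have := Nat.factorial_ne_zero k
  have := Nat.factorial_ne_zero j
  unfold hankelCoeff rayleighRatio
  rw [hI, ← h1', ← h2']
  push_cast
  field_simp
  rw [pow_add, mul_pow]
  ring

lemma sphHankel_eq_reducedHankel (n : ℕ) {z : ℂ} (hz : z ≠ 0) :
    sphHankel n z = (-I) ^ (n + 1) * hankelCoeff n * reducedHankel n z / z ^ (n + 1) := by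
  have hterm : ∀ k ∈ range (n + 1), I ^ k / (k ! * (2 * z) ^ k) * ((n + k)! / (n - k)!) =
      hankelCoeff n * ((-I * z) ^ (n - k) * rayleighRatio n (n - k) / (n - k)!) / z ^ n := by
    intro k hk
    obtain ⟨j, rfl⟩ := Nat.exists_eq_add_of_le (Nat.lt_succ_iff.mp (mem_range.mp hk))
    rw [Nat.add_sub_cancel_left]
    exact sphHankel_summand_eq k j hz
  have hreflect := sum_range_reflect (fun j => (-I * z) ^ j * rayleighRatio n j / j !) (n + 1)
  simp only [Nat.add_sub_cancel] at hreflect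
  unfold sphHankel reducedHankel
  rw [sum_congr rfl hterm, ← sum_div, ← mul_sum, hreflect]
  field_simp
  ring

lemma differentiable_reducedHankel (n : ℕ) : Differentiable ℂ (reducedHankel n) := by
  unfold reducedHankel; fun_prop

lemma hasDerivAt_sphHankel (n : ℕ) {z : ℂ} (hz : z ≠ 0) :
    HasDerivAt (sphHankel n) ((-I) ^ (n + 1) * hankelCoeff n *
      (z * deriv (reducedHankel n) z - (n + 1) * reducedHankel n z) / z ^ (n + 2)) z := by
  have hF := ((differentiable_reducedHankel n z).hasDerivAt.const_mul
    ((-I) ^ (n + 1) * hankelCoeff n)).div (hasDerivAt_pow (n + 1) z) (pow_ne_zero _ hz)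
  have heq : (fun w => (-I) ^ (n + 1) * hankelCoeff n * reducedHankel n w / w ^ (n + 1))
      =ᶠ[𝓝 z] sphHankel n := by
    filter_upwards [eventually_ne_nhds hz] with w hw
    exact (sphHankel_eq_reducedHankel n hw).symm
  refine (hF.congr_of_eventuallyEq heq.symm).congr_deriv ?_
  field_simp
  push_cast
  ring

lemma zfun_eq_reducedHankel (n : ℕ) {z : ℂ} (hz : z ≠ 0) :
    zfun n z = (-I) ^ (n + 1) * hankelCoeff n *
      (z * deriv (reducedHankel n) z - n * reducedHankel n z) / z ^ (n + 1) := by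
  rw [zfun, (hasDerivAt_sphHankel n hz).deriv, sphHankel_eq_reducedHankel n hz]
  field_simp
  ring

lemma mul_sphHankel_div_zfun_eq_dtnRatio (n : ℕ) {z : ℂ} (hz : z ≠ 0) :
    z * sphHankel n z / zfun n z = dtnRatio n (reducedHankel n) z := by
  have hc := hankelCoeff_ne_zero n
  rw [sphHankel_eq_reducedHankel n hz, zfun_eq_reducedHankel n hz, dtnRatio]
  rcases eq_or_ne (z * deriv (reducedHankel n) z - n * reducedHankel n z) 0 with hD | hD
  · simp [hD] -- both sides are `_ / 0 = 0`
  · field_simp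

lemma hasDerivAt_mul_sphHankel_div_zfun (n : ℕ) {κ R : ℂ} (hκ : κ ≠ 0) (hR : R ≠ 0)
    (hD : κ * R * deriv (reducedHankel n) (κ * R) - n * reducedHankel n (κ * R) ≠ 0) :
    HasDerivAt (fun κ => κ * sphHankel n (κ * R) / zfun n (κ * R))
      (((κ * R) ^ 2 * (deriv (reducedHankel n) (κ * R) ^ 2 -
        reducedHankel n (κ * R) * deriv (deriv (reducedHankel n)) (κ * R)) -
        n * reducedHankel n (κ * R) ^ 2) /
        (κ * R * deriv (reducedHankel n) (κ * R) - n * reducedHankel n (κ * R)) ^ 2) κ := by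
  have hF := differentiable_reducedHankel n
  have hG := ((hasDerivAt_dtnRatio (hF _) (hF.deriv _) hD).comp κ
    (hasDerivAt_mul_const R)).div_const R
  have heq : (fun κ => dtnRatio n (reducedHankel n) (κ * R) / R)
      =ᶠ[𝓝 κ] fun κ => κ * sphHankel n (κ * R) / zfun n (κ * R) := by
    filter_upwards [eventually_ne_nhds hκ] with x hx
    rw [← mul_sphHankel_div_zfun_eq_dtnRatio n (mul_ne_zero hx hR)]
    field_simp
  exact (hG.congr_of_eventuallyEq heq.symm).congr_deriv (mul_div_cancel_right₀ _ hR)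

lemma norm_rayleighSum_sub_expSum_le (n : ℕ) (x : ℂ) :
    ‖∑ j ∈ range (n + 1), x ^ j * rayleighRatio n j / (j !) - ∑ j ∈ range (n + 1), x ^ j / (j !)‖
      ≤ Real.exp (4 * ‖x‖) / (2 * n) := by
  rw [← sum_sub_distrib]
  have hterm : ∀ j ∈ range (n + 1), ‖x ^ j * rayleighRatio n j / (j !) - x ^ j / (j !)‖ ≤
      (4 * ‖x‖) ^ j / (j !) / (2 * n) := by
    intro j hj
    have hjn : j ≤ n := Nat.lt_succ_iff.mp (mem_range.mp hj)
    have hr : ‖((rayleighRatio n j : ℂ) - 1)‖ = 1 - rayleighRatio n j := by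
      rw [← Complex.ofReal_one, ← Complex.ofReal_sub, Complex.norm_real, Real.norm_eq_abs,
        abs_of_nonpos (by linarith [rayleighRatio_le_one hjn]), neg_sub]
    have hj4 : (j : ℝ) ^ 2 ≤ 4 ^ j := by
      have : (j : ℝ) ≤ 2 ^ j := by exact_mod_cast j.lt_two_pow_self.le
      calc (j : ℝ) ^ 2 ≤ (2 ^ j) ^ 2 := by gcongr
        _ = 4 ^ j := by rw [← pow_mul, mul_comm, pow_mul]; norm_num
    calc ‖x ^ j * rayleighRatio n j / (j !) - x ^ j / (j !)‖
        = ‖x‖ ^ j * (1 - rayleighRatio n j) / (j !) := by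
          rw [← sub_div, ← mul_sub_one, norm_div, norm_mul, norm_pow, hr]
          simp
      _ ≤ ‖x‖ ^ j * (j ^ 2 / (2 * n)) / (j !) := by
          gcongr; exact one_sub_rayleighRatio_le hjn
      _ ≤ ‖x‖ ^ j * (4 ^ j / (2 * n)) / (j !) := by gcongr
      _ = (4 * ‖x‖) ^ j / (j !) / (2 * n) := by ring
  calc _ ≤ ∑ j ∈ range (n + 1), (4 * ‖x‖) ^ j / (j !) / (2 * n) := norm_sum_le_of_le _ hterm
    _ ≤ Real.exp (4 * ‖x‖) / (2 * n) := by
      rw [← sum_div]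
      gcongr
      exact Real.sum_le_exp_of_nonneg (by positivity) _

lemma eventually_norm_exp_sub_sum_le (ρ : ℝ) :
    ∀ᶠ n : ℕ in atTop, ∀ x : ℂ, ‖x‖ ≤ ρ →
      ‖exp x - ∑ j ∈ range (n + 1), x ^ j / (j !)‖ ≤ 2 / n := by
  have hsmall : Tendsto (fun n : ℕ => ρ * (ρ ^ n / n !)) atTop (𝓝 0) := by
    simpa using (FloorSemiring.tendsto_pow_div_factorial_atTop ρ).const_mul ρ
  filter_upwards [hsmall.eventually_le_const one_pos, eventually_ge_atTop ⌈2 * ρ⌉₊,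
    eventually_gt_atTop 0] with n hn hnρ hn0 x hx
  have hρ : 2 * ρ ≤ n := Nat.ceil_le.mp hnρ
  have hn0' : (0 : ℝ) < n := by exact_mod_cast hn0
  have hx' : ‖x‖ / (n + 1).succ ≤ 1 / 2 := by
    rw [div_le_iff₀ (by positivity)]; push_cast; linarith
  calc ‖exp x - ∑ j ∈ range (n + 1), x ^ j / (j !)‖ ≤ ‖x‖ ^ (n + 1) / (n + 1)! * 2 :=
        Complex.exp_bound' hx'
    _ ≤ ρ ^ (n + 1) / (n + 1)! * 2 := by gcongr
    _ = ρ * (ρ ^ n / n !) / (n + 1) * 2 := by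
        rw [Nat.factorial_succ]; push_cast; field_simp; ring
    _ ≤ 1 / n * 2 := by gcongr; linarith
    _ = 2 / n := by ring

lemma exists_eventually_norm_reducedHankel_sub_one_le (ρ : ℝ) :
    ∃ K, ∀ᶠ n : ℕ in atTop, ∀ z : ℂ, ‖z‖ ≤ ρ → ‖reducedHankel n z - 1‖ ≤ K / n := by
  refine ⟨Real.exp ρ * (Real.exp (4 * ρ) / 2 + 2), ?_⟩
  filter_upwards [eventually_norm_exp_sub_sum_le ρ] with n hn z hz
  set x := -I * z
  have hx : ‖x‖ ≤ ρ := by simpa [x] using hz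
  have hsplit : reducedHankel n z - 1 = exp (I * z) *
      ((∑ j ∈ range (n + 1), x ^ j * rayleighRatio n j / (j !) - ∑ j ∈ range (n + 1), x ^ j / (j !))
        - (exp x - ∑ j ∈ range (n + 1), x ^ j / (j !))) := by
    rw [reducedHankel, sub_sub_sub_cancel_right, mul_sub, ← Complex.exp_add]
    simp [x]
  have hexp : ‖exp (I * z)‖ ≤ Real.exp ρ :=
    (Complex.norm_exp_le_exp_norm _).trans (Real.exp_le_exp.mpr (by simpa using hz))
  rw [hsplit, norm_mul, mul_div_assoc]
  refine mul_le_mul hexp ?_ (norm_nonneg _) (Real.exp_pos ρ).le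
  calc _ ≤ Real.exp (4 * ‖x‖) / (2 * n) + 2 / n :=
        (norm_sub_le _ _).trans (add_le_add (norm_rayleighSum_sub_expSum_le n x) (hn x hx))
    _ ≤ Real.exp (4 * ρ) / (2 * n) + 2 / n := by gcongr
    _ = (Real.exp (4 * ρ) / 2 + 2) / n := by ring

lemma reducedHankel_asymptotics (w : ℂ) :
    Tendsto (fun n => reducedHankel n w) atTop (𝓝 1) ∧
    (fun n => deriv (reducedHankel n) w) =O[atTop] (fun n : ℕ => (n : ℂ)⁻¹) ∧
    (fun n => deriv (deriv (reducedHankel n)) w) =O[atTop] (fun n : ℕ => (n : ℂ)⁻¹) := by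
  obtain ⟨K, hK⟩ := exists_eventually_norm_reducedHankel_sub_one_le (‖w‖ + 1)
  have hsphere : ∀ᶠ n : ℕ in atTop, ∀ z ∈ sphere w 1, ‖reducedHankel n z - 1‖ ≤ K / n := by
    filter_upwards [hK] with n hn z hz
    refine hn z ((norm_le_norm_add_norm_sub' z w).trans ?_)
    rw [← dist_eq_norm, mem_sphere.mp hz]
  have hcenter : ∀ᶠ n : ℕ in atTop, ‖reducedHankel n w - 1‖ ≤ K / n := by
    filter_upwards [hK] with n hn using hn w (by linarith)
  have hcauchy := hsphere.mono fun n hn =>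
    norm_deriv_le_and_norm_deriv_deriv_le (differentiable_reducedHankel n) hn
  refine ⟨tendsto_iff_norm_sub_tendsto_zero.mpr <| squeeze_zero' (.of_forall fun _ => norm_nonneg _)
    hcenter (tendsto_const_div_atTop_nhds_zero_nat K), .of_bound K ?_, .of_bound (2 * K) ?_⟩
  · filter_upwards [hcauchy] with n hn
    simpa [div_eq_mul_inv] using hn.1
  · filter_upwards [hcauchy] with n hn
    simpa [div_eq_mul_inv, mul_assoc] using hn.2

theorem dtn_coeff_U_deriv_asymptotic (κ₀ : ℂ) (hκ₀ : κ₀ ≠ 0) (R : ℝ) (hR : 0 < R) :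
    ∃ (N₀ : ℕ) (C : ℝ), 0 < C ∧ ∀ n : ℕ, N₀ ≤ n →
      sphHankel n (κ₀ * R) ≠ 0 ∧ zfun n (κ₀ * R) ≠ 0 ∧
      DifferentiableAt ℂ
        (fun κ : ℂ => κ * sphHankel n (κ * R) / zfun n (κ * R)) κ₀ ∧
      ‖deriv (fun κ : ℂ => κ * sphHankel n (κ * R) / zfun n (κ * R)) κ₀
          + 1 / (n : ℂ)‖ ≤ C / (n : ℝ) ^ 2 := by
  have hR' : (R : ℂ) ≠ 0 := by exact_mod_cast hR.ne'
  have hw : κ₀ * R ≠ 0 := mul_ne_zero hκ₀ hR'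
  obtain ⟨hp, hq, hs⟩ := reducedHankel_asymptotics (κ₀ * R)
  obtain ⟨hD, hE⟩ := dtnRatio_deriv_asymptotics (κ₀ * R) hp hq hs
  obtain ⟨C, hC, hCE⟩ := hE.exists_pos
  obtain ⟨N₀, hN₀⟩ := eventually_atTop.mp <|
    (hp.eventually_ne one_ne_zero).and <| hD.and <| hCE.bound.and <| eventually_gt_atTop 0
  refine ⟨N₀, C, hC, fun n hn => ?_⟩
  obtain ⟨hp0, hD0, hbound, hn0⟩ := hN₀ n hn
  have hderiv := hasDerivAt_mul_sphHankel_div_zfun n hκ₀ hR' hD0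
  refine ⟨?_, ?_, hderiv.differentiableAt, ?_⟩
  · rw [sphHankel_eq_reducedHankel n hw]
    simp [hp0, hw, hankelCoeff_ne_zero, I_ne_zero]
  · rw [zfun_eq_reducedHankel n hw]
    simp [hD0, hw, hankelCoeff_ne_zero, I_ne_zero]
  · have hn1 : (1 : ℝ) ≤ n := by exact_mod_cast hn0
    rw [hderiv.deriv, one_div]
    calc _ ≤ C * ‖(n : ℂ)⁻¹ ^ 3‖ := hbound
      _ = C / n ^ 3 := by simp [div_eq_mul_inv]
      _ ≤ C / n ^ 2 := by gcongr; norm_num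
end

section
/- Let κ = κ₁ + iκ₂ ∈ ℂ with κ₂ < 0, let X ≥ 0 and Y ≥ 0 be real numbers, and let S ∈ ℂ with Re(S) ≤ 0. Then |(1/(iκ))·X + (iκ)·Y − S| ≥ min{1, 1/|κ|²} · |κ₂| · (X + Y). -/
/-!
Bound the norm from below by the real part. Since `Re (1 / (iκ)) = -κ₂ / |κ|²` and `Re (iκ) = -κ₂`,
the real part is `|κ₂| (X / |κ|² + Y) - Re S`, and both `-Re S` and the gap between
`X / |κ|² + Y` and `min {1, 1 / |κ|²} (X + Y)` are nonnegative.
-/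

open Complex

theorem min_mul_add_le_add {R : Type*} [Semiring R] [LinearOrder R] [IsOrderedRing R]
    {p q X Y : R} (hX : 0 ≤ X) (hY : 0 ≤ Y) : min p q * (X + Y) ≤ q * X + p * Y := by
  rw [mul_add]
  exact add_le_add (mul_le_mul_of_nonneg_right (min_le_right p q) hX)
    (mul_le_mul_of_nonneg_right (min_le_left p q) hY)

theorem Complex.one_div_I_mul_re (κ : ℂ) : (1 / (I * κ)).re = -κ.im / ‖κ‖ ^ 2 := by
  rw [one_div, inv_re, I_mul_re, normSq_mul, normSq_I, one_mul, Complex.sq_norm]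

theorem Complex.re_one_div_I_mul_mul_add_I_mul_mul (κ : ℂ) (X Y : ℝ) :
    (1 / (I * κ) * (X : ℂ) + I * κ * (Y : ℂ)).re = -κ.im * (1 / ‖κ‖ ^ 2 * X + 1 * Y) := by
  rw [add_re, re_mul_ofReal, re_mul_ofReal, one_div_I_mul_re, I_mul_re]
  ring

theorem infSup_core_inequality (κ : ℂ) (hκ : κ.im < 0) (X Y : ℝ)
    (hX : 0 ≤ X) (hY : 0 ≤ Y) (S : ℂ) (hS : S.re ≤ 0) :
    min 1 (1 / ‖κ‖ ^ 2) * |κ.im| * (X + Y) ≤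
      ‖1 / (Complex.I * κ) * (X : ℂ) + Complex.I * κ * (Y : ℂ) - S‖ := by
  calc min 1 (1 / ‖κ‖ ^ 2) * |κ.im| * (X + Y)
      = |κ.im| * (min 1 (1 / ‖κ‖ ^ 2) * (X + Y)) := by ring
    _ ≤ |κ.im| * (1 / ‖κ‖ ^ 2 * X + 1 * Y) :=
        mul_le_mul_of_nonneg_left (min_mul_add_le_add hX hY) (abs_nonneg _)
    _ = (1 / (I * κ) * (X : ℂ) + I * κ * (Y : ℂ)).re := by
        rw [re_one_div_I_mul_mul_add_I_mul_mul, abs_of_neg hκ]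
    _ ≤ (1 / (I * κ) * (X : ℂ) + I * κ * (Y : ℂ) - S).re := by
        rw [sub_re]
        linarith
    _ ≤ ‖1 / (I * κ) * (X : ℂ) + I * κ * (Y : ℂ) - S‖ := re_le_norm _
end
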